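/- arXiv:1802.08809 — 6 statements merged into one kernel-verified Lean document; each statement's English description precedes it below -/
import Mathlib

section
/- In a semimodular lattice with no infinite chains in intervals, all maximal chains in any interval [x, y] have the same length (Jordan–Dedekind chain condition). -/
/-!
Induction on the size of a maximal chain `c` of `[u, v]`. The element `a` of `c` just above `u`
covers `u`, and removing `u` leaves a maximal chain of `[a, v]`; likewise `b` for a second
maximal chain `d`. If `a = b` the induction hypothesis applies directly. Otherwise `a ⊓ b = u`,
so semimodularity makes `a ⊔ b` cover both `a` and `b`, and any maximal chain `e` of
`[a ⊔ b, v]` gives maximal chains `{a} ∪ e` of `[a, v]` and `{b} ∪ e` of `[b, v]` of equal size,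
which the induction hypothesis compares with `c \ {u}` and `d \ {u}` respectively.
-/

/-- A maximal chain in a subset `I` of a lattice: a chain contained in `I`
that is not properly contained in any other chain contained in `I`. -/
def IsMaximalChainIn {L : Type*} [Lattice L] (I : Set L) (c : Set L) : Prop :=
  c ⊆ I ∧ IsChain (· ≤ ·) c ∧
    ∀ c' : Set L, c' ⊆ I → IsChain (· ≤ ·) c' → c ⊆ c' → c' = c

open Set

theorem IsChain.exists_isLeast_of_finite {α : Type*} [Preorder α] {s : Set α}
    (hc : IsChain (· ≤ ·) s) (hs : s.Finite) (hne : s.Nonempty) : ∃ a, IsLeast s a := by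
  obtain ⟨a, ha⟩ := hs.exists_minimal hne
  exact ⟨a, ha.prop, fun w hw => (hc.total ha.prop hw).elim id fun hwa => ha.le_of_le hw hwa⟩

section

variable {L : Type*} [Lattice L] {I c e : Set L} {a m u v z : L}

theorem isMaximalChainIn_iff : IsMaximalChainIn I c ↔
    c ⊆ I ∧ IsChain (· ≤ ·) c ∧ ∀ z ∈ I, (∀ w ∈ c, z ≤ w ∨ w ≤ z) → z ∈ c := by
  refine ⟨fun ⟨hcI, hc, hmax⟩ => ⟨hcI, hc, fun z hz hcomp => ?_⟩,
    fun ⟨hcI, hc, hmem⟩ => ⟨hcI, hc, fun c' hc'I hc' hcc' => ?_⟩⟩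
  · rw [← hmax _ (insert_subset hz hcI) (hc.insert fun w hw _ => hcomp w hw) (subset_insert z c)]
    exact mem_insert z c
  · exact (subset_antisymm hcc' fun z hz =>
      hmem z (hc'I hz) fun w hw => hc'.total hz (hcc' hw)).symm

theorem exists_isMaximalChainIn (I : Set L) : ∃ c, IsMaximalChainIn I c := by
  obtain ⟨M, hM, -⟩ := (subsingleton_empty (α := I)).isChain.exists_maxChain (r := (· ≤ ·))
  refine ⟨(↑) '' M, isMaximalChainIn_iff.2 ⟨?_, ?_, fun z hz hcomp => ?_⟩⟩
  · rintro _ ⟨w, -, rfl⟩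
    exact w.2
  · rintro _ ⟨w, hw, rfl⟩ _ ⟨w', hw', rfl⟩ hne
    exact hM.isChain hw hw' (ne_of_apply_ne _ hne)
  · have hcomp' : ∀ w ∈ M, (⟨z, hz⟩ : I) ≤ w ∨ w ≤ ⟨z, hz⟩ := fun w hw => hcomp w ⟨w, hw, rfl⟩
    have := hM.2 (hM.isChain.insert fun w hw _ => hcomp' w hw) (subset_insert _ M)
    exact ⟨⟨z, hz⟩, this ▸ mem_insert _ M, rfl⟩

namespace IsMaximalChainIn

theorem mem_of_comparable (h : IsMaximalChainIn I c) (hz : z ∈ I)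
    (hcomp : ∀ w ∈ c, z ≤ w ∨ w ≤ z) : z ∈ c :=
  (isMaximalChainIn_iff.1 h).2.2 z hz hcomp

theorem left_mem (h : IsMaximalChainIn (Icc u v) c) (huv : u ≤ v) : u ∈ c :=
  h.mem_of_comparable ⟨le_rfl, huv⟩ fun _ hw => .inl (h.1 hw).1

theorem right_mem (h : IsMaximalChainIn (Icc u v) c) (huv : u ≤ v) : v ∈ c :=
  h.mem_of_comparable ⟨huv, le_rfl⟩ fun _ hw => .inr (h.1 hw).2

theorem eq_singleton (h : IsMaximalChainIn (Icc u u) c) : c = {u} :=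
  eq_singleton_iff_unique_mem.2 ⟨h.left_mem le_rfl, fun _ hz => le_antisymm (h.1 hz).2 (h.1 hz).1⟩

theorem insert_of_covBy (he : IsMaximalChainIn (Icc m v) e) (hmv : m ≤ v) (ham : a ⋖ m) :
    IsMaximalChainIn (Icc a v) (insert a e) := by
  have hm := he.left_mem hmv
  refine isMaximalChainIn_iff.2 ⟨insert_subset ⟨le_rfl, ham.le.trans hmv⟩ fun w hw =>
      ⟨ham.le.trans (he.1 hw).1, (he.1 hw).2⟩,
    he.2.1.insert fun w hw _ => .inl (ham.le.trans (he.1 hw).1), fun z hz hcomp => ?_⟩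
  rcases hcomp m (mem_insert_of_mem a hm) with hzm | hmz
  · rcases ham.eq_or_eq hz.1 hzm with rfl | rfl
    · exact mem_insert z e
    · exact mem_insert_of_mem a hm
  · exact mem_insert_of_mem a <|
      he.mem_of_comparable ⟨hmz, hz.2⟩ fun w hw => hcomp w (mem_insert_of_mem a hw)

theorem exists_covBy_diff_singleton (h : IsMaximalChainIn (Icc u v) c) (hc : c.Finite)
    (huv : u < v) :
    ∃ a ∈ c, u ⋖ a ∧ IsMaximalChainIn (Icc a v) (c \ {u}) := by
  have hcI := h.1
  have hch := h.2.1
  obtain ⟨a, ⟨hac, hau⟩, hleast⟩ := (hch.mono sdiff_subset).exists_isLeast_of_finite hc.sdiff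
    ⟨v, h.right_mem huv.le, mem_singleton_iff.not.2 huv.ne'⟩
  have hua : u < a := (hcI hac).1.lt_of_ne (Ne.symm hau)
  have hcomp_u : ∀ z, u ≤ z → (∀ w ∈ c \ {u}, z ≤ w ∨ w ≤ z) → ∀ w ∈ c, z ≤ w ∨ w ≤ z := by
    intro z huz hcomp w hw
    by_cases hwu : w = u
    · exact .inr (hwu ▸ huz)
    · exact hcomp w ⟨hw, hwu⟩
  refine ⟨a, hac, ⟨hua, fun z huz hza => ?_⟩, isMaximalChainIn_iff.2 ⟨fun w hw =>
      ⟨hleast hw, (hcI hw.1).2⟩, hch.mono sdiff_subset, fun z hz hcomp => ⟨?_, ?_⟩⟩⟩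
  · have hzc := h.mem_of_comparable ⟨huz.le, hza.le.trans (hcI hac).2⟩
      (hcomp_u z huz.le fun w hw => .inl (hza.le.trans (hleast hw)))
    exact hza.not_ge (hleast ⟨hzc, huz.ne'⟩)
  · exact h.mem_of_comparable ⟨hua.le.trans hz.1, hz.2⟩ (hcomp_u z (hua.le.trans hz.1) hcomp)
  · exact (hua.trans_le hz.1).ne'

end IsMaximalChainIn

theorem IsMaximalChainIn.ncard_eq [IsWeakUpperModularLattice L]
    (hfin : ∀ x y : L, ∀ c : Set L, c ⊆ Icc x y → IsChain (· ≤ ·) c → c.Finite)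
    {d : Set L} (huv : u ≤ v) (hc : IsMaximalChainIn (Icc u v) c)
    (hd : IsMaximalChainIn (Icc u v) d) : c.ncard = d.ncard := by
  induction hn : c.ncard using Nat.strong_induction_on generalizing u c d with
  | _ n ih =>
  obtain rfl | huv := huv.eq_or_lt
  · rw [← hn, hc.eq_singleton, hd.eq_singleton]
  have hcfin := hfin _ _ _ hc.1 hc.2.1
  have hdfin := hfin _ _ _ hd.1 hd.2.1
  obtain ⟨a, hac, hua, hc'⟩ := hc.exists_covBy_diff_singleton hcfin huv
  obtain ⟨b, hbd, hub, hd'⟩ := hd.exists_covBy_diff_singleton hdfin huv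
  have hc_card := ncard_sdiff_singleton_add_one (hc.left_mem huv.le) hcfin
  have hd_card := ncard_sdiff_singleton_add_one (hd.left_mem huv.le) hdfin
  suffices (c \ {u}).ncard = (d \ {u}).ncard by omega
  have hlt : (c \ {u}).ncard < n := by omega
  obtain rfl | hab := eq_or_ne a b
  · exact ih _ hlt (hc.1 hac).2 hc' hd' rfl
  have hinf : a ⊓ b = u := hua.wcovBy.inf_eq hub.wcovBy hab
  have ham : a ⋖ a ⊔ b := covBy_sup_of_inf_covBy_of_inf_covBy_left (hinf ▸ hua) (hinf ▸ hub)
  have hbm : b ⋖ a ⊔ b := covBy_sup_of_inf_covBy_of_inf_covBy_right (hinf ▸ hua) (hinf ▸ hub)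
  have hmv : a ⊔ b ≤ v := sup_le (hc.1 hac).2 (hd.1 hbd).2
  obtain ⟨e, he⟩ := exists_isMaximalChainIn (Icc (a ⊔ b) v)
  have hefin := hfin _ _ _ he.1 he.2.1
  have hae : a ∉ e := fun h => ham.lt.not_ge (he.1 h).1
  have hbe : b ∉ e := fun h => hbm.lt.not_ge (he.1 h).1
  have hcae : (c \ {u}).ncard = (insert a e).ncard :=
    ih _ hlt (hc.1 hac).2 hc' (he.insert_of_covBy hmv ham) rfl
  have hswap : (insert a e).ncard = (insert b e).ncard := by
    rw [ncard_insert_of_notMem hae hefin, ncard_insert_of_notMem hbe hefin]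
  rw [hcae, hswap]
  exact ih _ (hswap ▸ hcae ▸ hlt) (hd.1 hbd).2 (he.insert_of_covBy hmv hbm) hd' rfl

end

/-- Jordan–Dedekind chain condition: in a semimodular lattice with no infinite
chains in intervals, any two maximal chains of an interval `[x, y]` have the
same length (equivalently, the same cardinality). -/
theorem stmt2 {L : Type*} [Lattice L]
    (hfin : ∀ x y : L, ∀ c : Set L, c ⊆ Set.Icc x y → IsChain (· ≤ ·) c → c.Finite)
    (hsemi : ∀ x a : L, x ⊓ a ⋖ a → x ⋖ x ⊔ a)
    {x y : L} (hxy : x ≤ y)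
    {c₁ c₂ : Set L}
    (h1 : IsMaximalChainIn (Set.Icc x y) c₁)
    (h2 : IsMaximalChainIn (Set.Icc x y) c₂) :
    c₁.ncard = c₂.ncard := by
  have : IsUpperModularLattice L := ⟨fun {a b} h => by
    rw [sup_comm]
    exact hsemi b a (by rwa [inf_comm])⟩
  exact h1.ncard_eq hfin hxy h2
end

section
/- Let L be a uniform semimodular lattice with ascending operator x ↦ x⁺. The inverse operator is given by x⁻ = meet of all elements covered by x; in particular, every element y covered by x⁺ satisfies x ≤ y ≤ x⁺. -/
/-!
Put `u = e⁻¹ x`, so `x = u⁺` is the join of the atoms of `[u, x]`. Each `y ⋖ x` lies above `u`: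
`e⁻¹ y ⋖ u` gives `u ≤ (e⁻¹ y)⁺ = y`. Conversely, by semimodularity every atom `a` of `[u, x]`
has a complement `c ⋖ x` with `c ⊓ a = u`, so the elements covered by `x` have no common lower
bound strictly above `u`.
-/

section FiniteChains

variable {α : Type*} [Preorder α]

theorem exists_le_maximal_of_chains_finite
    (hfin : ∀ x y : α, ∀ c : Set α, c ⊆ Set.Icc x y → IsChain (· ≤ ·) c → c.Finite)
    {a b x : α} {s : Set α} (hs : s ⊆ Set.Icc a b) (hx : x ∈ s) :
    ∃ m, x ≤ m ∧ Maximal (· ∈ s) m := by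
  refine zorn_le_nonempty₀ s (fun c hcs hc y hy => ?_) x hx
  obtain ⟨m, hmc, hm⟩ := (hfin a b c (hcs.trans hs) hc).exists_maximal ⟨y, hy⟩
  exact ⟨m, hcs hmc, fun z hz => (hc.total hz hmc).elim id (hm hz)⟩

theorem exists_minimal_le_of_chains_finite
    (hfin : ∀ x y : α, ∀ c : Set α, c ⊆ Set.Icc x y → IsChain (· ≤ ·) c → c.Finite)
    {a b x : α} {s : Set α} (hs : s ⊆ Set.Icc a b) (hx : x ∈ s) :
    ∃ m, m ≤ x ∧ Minimal (· ∈ s) m :=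
  exists_le_maximal_of_chains_finite (α := αᵒᵈ)
    (fun x y c hc hch => hfin y x c (fun _ hz => ⟨(hc hz).2, (hc hz).1⟩) hch.symm)
    (a := OrderDual.toDual b) (b := OrderDual.toDual a) (fun _ hz => ⟨(hs hz).2, (hs hz).1⟩) hx

theorem isStronglyAtomic_of_chains_finite
    (hfin : ∀ x y : α, ∀ c : Set α, c ⊆ Set.Icc x y → IsChain (· ≤ ·) c → c.Finite) :
    IsStronglyAtomic α where
  exists_covBy_le_of_lt a b hab := by
    obtain ⟨m, hmb, ⟨ham, -⟩, hmin⟩ := exists_minimal_le_of_chains_finite hfin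
      (s := {z | a < z ∧ z ≤ b}) (fun z hz => ⟨hz.1.le, hz.2⟩) ⟨hab, le_rfl⟩
    exact ⟨m, ⟨ham, fun z haz hzm => (hmin ⟨haz, hzm.le.trans hmb⟩ hzm.le).not_gt hzm⟩, hmb⟩

end FiniteChains

section UpperModular

variable {L : Type*} [Lattice L]

theorem inf_eq_of_covBy_of_not_le {u w c : L} (huw : u ⋖ w) (huc : u ≤ c) (hwc : ¬ w ≤ c) :
    c ⊓ w = u :=
  (huw.eq_or_eq (le_inf huc huw.le) inf_le_right).resolve_right
    fun h => hwc (inf_eq_right.mp h)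

variable [IsUpperModularLattice L]

theorem covBy_sup_of_covBy_of_not_le {u w c : L} (huw : u ⋖ w) (huc : u ≤ c) (hwc : ¬ w ≤ c) :
    c ⋖ c ⊔ w :=
  covBy_sup_of_inf_covBy_right (by rwa [inf_eq_of_covBy_of_not_le huw huc hwc])

theorem exists_covBy_inf_eq_of_isLUB
    (hfin : ∀ x y : L, ∀ c : Set L, c ⊆ Set.Icc x y → IsChain (· ≤ ·) c → c.Finite)
    {u x a : L} (hx : IsLUB {w | u ⋖ w} x) (ha : u ⋖ a) :
    ∃ c, c ⋖ x ∧ c ⊓ a = u := by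
  obtain ⟨c, -, ⟨⟨huc, hcx⟩, hca⟩, hmax⟩ := exists_le_maximal_of_chains_finite hfin
    (s := {c | c ∈ Set.Icc u x ∧ c ⊓ a = u}) (fun _ hc => hc.1)
    ⟨⟨le_rfl, ha.le.trans (hx.1 ha)⟩, inf_eq_left.mpr ha.le⟩
  have hac : ¬ a ≤ c := fun h => ha.ne (hca.symm.trans (inf_eq_right.mpr h))
  have hcov : c ⋖ c ⊔ a := covBy_sup_of_covBy_of_not_le ha huc hac
  refine ⟨c, ?_, hca⟩
  suffices hsup : c ⊔ a = x from hsup ▸ hcov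
  -- an atom `w ≰ c ⊔ a` would make `c ⊔ w` a larger element of `[u, x]` meeting `a` in `u`
  by_contra hne
  obtain ⟨w, huw, hw⟩ : ∃ w, u ⋖ w ∧ ¬ w ≤ c ⊔ a := by
    by_contra! h
    exact hne ((sup_le hcx (hx.1 ha)).antisymm (hx.2 h))
  have hwc : ¬ w ≤ c := fun h => hw (h.trans le_sup_left)
  have hcw : c ⋖ c ⊔ w := covBy_sup_of_covBy_of_not_le huw huc hwc
  have hacw : a ≤ c ⊔ w := by
    by_contra h
    have hle : c ⊔ w ≤ c := hmax ⟨⟨huc.trans le_sup_left, sup_le hcx (hx.1 huw)⟩,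
      inf_eq_of_covBy_of_not_le ha (huc.trans le_sup_left) h⟩ le_sup_left
    exact hwc (le_sup_right.trans hle)
  have hsup_eq : c ⊔ a = c ⊔ w :=
    (hcw.eq_or_eq hcov.le (sup_le le_sup_left hacw)).resolve_left hcov.ne'
  exact hw (hsup_eq ▸ le_sup_right)

theorem isGLB_covBy_of_isLUB_covBy [IsStronglyAtomic L]
    (hfin : ∀ x y : L, ∀ c : Set L, c ⊆ Set.Icc x y → IsChain (· ≤ ·) c → c.Finite)
    {u x : L} (hx : IsLUB {w | u ⋖ w} x) (hu : ∀ y, y ⋖ x → u ≤ y) :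
    IsGLB {y | y ⋖ x} u := by
  refine ⟨hu, fun b hb => ?_⟩
  by_contra hbu
  obtain ⟨a, hua, hab⟩ := exists_covBy_le_of_lt (right_lt_sup.mpr hbu)
  obtain ⟨c, hcx, hca⟩ := exists_covBy_inf_eq_of_isLUB hfin hx hua
  have hac : a ≤ c := hab.trans (sup_le (hb hcx) (hu c hcx))
  exact hua.ne (hca.symm.trans (inf_eq_right.mpr hac))

end UpperModular

theorem OrderIso.le_of_covBy_apply {α : Type*} [Preorder α] (e : α ≃o α)
    (he : ∀ x, IsLUB {y | x ⋖ y} (e x)) {y z : α} (h : y ⋖ e z) : z ≤ y := by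
  have : e.symm y ⋖ z := (apply_covBy_apply_iff e).mp (by rwa [e.apply_symm_apply])
  simpa using (he (e.symm y)).1 this

/-- In a uniform semimodular lattice with ascending operator `e`, the inverse
operator is given by `x⁻ = ⋀ {y : y ⋖ x}`; in particular every element `y`
covered by `x⁺` satisfies `x ≤ y ≤ x⁺`. -/
theorem stmt12 {L : Type*} [Lattice L]
    (hfin : ∀ x y : L, ∀ c : Set L, c ⊆ Set.Icc x y → IsChain (· ≤ ·) c → c.Finite)
    (hsemi : ∀ x a : L, x ⊓ a ⋖ a → x ⋖ x ⊔ a)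
    (e : L ≃o L) (he : ∀ x : L, IsLUB {y : L | x ⋖ y} (e x))
    (x : L) :
    IsGLB {y : L | y ⋖ x} (e.symm x) ∧
      ∀ y : L, y ⋖ e x → x ≤ y ∧ y ≤ e x := by
  have : IsStronglyAtomic L := isStronglyAtomic_of_chains_finite hfin
  have : IsUpperModularLattice L :=
    ⟨fun {a b} h => sup_comm b a ▸ hsemi b a (inf_comm a b ▸ h)⟩
  have hx : IsLUB {w | e.symm x ⋖ w} x := by simpa using he (e.symm x)
  refine ⟨isGLB_covBy_of_isLUB_covBy hfin hx fun y hy => ?_,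
    fun y hy => ⟨e.le_of_covBy_apply he hy, hy.le⟩⟩
  exact e.le_of_covBy_apply he (by simpa using hy)
end

section
/- Let L be a uniform semimodular lattice. For every x, y ∈ L there exists k ≥ 0 such that x ≤ (y)^{+k}, where (y)^{+k} denotes the k-th iterate of the ascending operator applied to y. -/
/-!
Induct upwards on `x ⊓ z` in the interval `[x ⊓ y, x]`, which has no infinite ascending chain,
starting from `z = y`. If `x ≰ z`, pick `c` covering `x ⊓ z` below `x`. Semimodularity gives
`z ⋖ z ⊔ c`, hence `z ⊔ c ≤ z⁺`, while `x ⊓ z < x ⊓ (z ⊔ c)`; so the induction hypothesis applied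
to `z ⊔ c` costs one more application of `⁺`.
-/

open Set

section FiniteChains

variable {α : Type*}

theorem Set.wellFoundedLT_of_isChain_finite [Preorder α] {s : Set α}
    (h : ∀ c ⊆ s, IsChain (· ≤ ·) c → c.Finite) : WellFoundedLT s := by
  refine ⟨wellFounded_iff_isEmpty_descending_chain.2 ⟨fun ⟨f, hf⟩ => ?_⟩⟩
  have hanti : StrictAnti ((↑) ∘ f : ℕ → α) := strictAnti_nat_of_succ_lt hf
  exact infinite_range_of_injective hanti.injective <|
    h _ (range_subset_iff.2 fun n => (f n).2) hanti.antitone.isChain_range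

theorem Set.wellFoundedGT_of_isChain_finite [Preorder α] {s : Set α}
    (h : ∀ c ⊆ s, IsChain (· ≤ ·) c → c.Finite) : WellFoundedGT s := by
  refine ⟨wellFounded_iff_isEmpty_descending_chain.2 ⟨fun ⟨f, hf⟩ => ?_⟩⟩
  have hmono : StrictMono ((↑) ∘ f : ℕ → α) := strictMono_nat_of_lt_succ hf
  exact infinite_range_of_injective hmono.injective <|
    h _ (range_subset_iff.2 fun n => (f n).2) hmono.monotone.isChain_range

theorem IsStronglyAtomic.of_wellFoundedLT_Icc [PartialOrder α]
    (h : ∀ a b : α, WellFoundedLT (Icc a b)) :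
    IsStronglyAtomic α where
  exists_covBy_le_of_lt a b hab := by
    have := h a b
    obtain ⟨c, hac, hcb⟩ := exists_covBy_le_of_lt (α := Icc a b)
      (a := ⟨a, le_rfl, hab.le⟩) (b := ⟨b, hab.le, le_rfl⟩) hab
    refine ⟨c, hac.image (OrderEmbedding.subtype _) ?_, hcb⟩
    rw [OrderEmbedding.coe_subtype, Subtype.range_coe]
    exact ordConnected_Icc

end FiniteChains

section UpperModular

variable {L : Type*} [Lattice L] [IsUpperModularLattice L]

theorem covBy_sup_of_inf_covBy_of_le {x y c : L} (hc : x ⊓ y ⋖ c) (hcx : c ≤ x) :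
    y ⋖ y ⊔ c := by
  have hyc : y ⊓ c = x ⊓ y :=
    le_antisymm (le_inf (inf_le_right.trans hcx) inf_le_left) (le_inf inf_le_right hc.le)
  exact covBy_sup_of_inf_covBy_right (hyc ▸ hc)

theorem exists_le_iterate_of_covBy_le [IsStronglyAtomic L] {f : L → L} (hf : Monotone f)
    (hcov : ∀ a b, a ⋖ b → b ≤ f a) {x y : L} [WellFoundedGT (Icc (x ⊓ y) x)] :
    ∃ k, x ≤ f^[k] y := by
  suffices H : ∀ w : Icc (x ⊓ y) x, ∀ z, x ⊓ z = w → ∃ k, x ≤ f^[k] z from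
    H ⟨x ⊓ y, le_rfl, inf_le_left⟩ y rfl
  intro w
  induction w using WellFoundedGT.induction with
  | _ w IH =>
    intro z hzw
    by_cases hxz : x ≤ z
    · exact ⟨0, hxz⟩
    obtain ⟨c, hc, hcx⟩ := exists_covBy_le_of_lt (inf_lt_left.2 hxz)
    have hlt : x ⊓ z < x ⊓ (z ⊔ c) := hc.lt.trans_le (le_inf hcx le_sup_right)
    obtain ⟨k, hk⟩ := IH ⟨x ⊓ (z ⊔ c), (hzw ▸ w.2.1).trans hlt.le, inf_le_left⟩
      (show (w : L) < x ⊓ (z ⊔ c) from hzw ▸ hlt) (z ⊔ c) rfl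
    refine ⟨k + 1, hk.trans ?_⟩
    rw [Function.iterate_succ_apply]
    exact hf.iterate k (hcov _ _ (covBy_sup_of_inf_covBy_of_le hc hcx))

end UpperModular

/-- In a uniform semimodular lattice with ascending operator `e`, for all
`x, y` there exists `k ≥ 0` with `x ≤ (y)^{+k}` (the `k`-th iterate of the
ascending operator applied to `y`). -/
theorem stmt13 {L : Type*} [Lattice L]
    (hfin : ∀ x y : L, ∀ c : Set L, c ⊆ Set.Icc x y → IsChain (· ≤ ·) c → c.Finite)
    (hsemi : ∀ x a : L, x ⊓ a ⋖ a → x ⋖ x ⊔ a)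
    (e : L ≃o L) (he : ∀ x : L, IsLUB {y : L | x ⋖ y} (e x))
    (x y : L) :
    ∃ k : ℕ, x ≤ (⇑e)^[k] y := by
  have : IsUpperModularLattice L :=
    ⟨fun h => by rw [sup_comm]; exact hsemi _ _ (by rwa [inf_comm])⟩
  have : IsStronglyAtomic L :=
    .of_wellFoundedLT_Icc fun a b => wellFoundedLT_of_isChain_finite (hfin a b)
  have : WellFoundedGT (Icc (x ⊓ y) x) := wellFoundedGT_of_isChain_finite (hfin _ _)
  exact exists_le_iterate_of_covBy_le e.monotone fun a _ hab => (he a).1 hab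
end

section
/- Let L be a uniform semimodular lattice. A chain x = e⁰ ⋖ e¹ ⋖ ⋯ ⋖ eˢ = y (each covering the previous) is a segment (i.e., e^{ℓ+1} ∉ [e^{ℓ−1}, (e^{ℓ−1})⁺] for 1 ≤ ℓ ≤ s−1) if and only if the interval [x, y] equals exactly {e⁰, e¹, …, eˢ}. -/
/-!
Upper semimodularity turns covers lower down into covers of `x`: if `u ≤ x`, `u ⋖ w` and
`w ≰ x`, then `x ⊓ w = u`, so `x ⋖ x ⊔ w`.

If some `z ∈ [c 0, c (s + 1)]` were off the chain, induction gives `z ⊓ c s = c i` with `i < s`,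
and a cover `w ≤ z` of `c i` makes `c (s + 1) = c s ⊔ w` a join of covers of `c (s - 1)`, i.e.
`c (s + 1) ≤ c (s - 1)⁺`. Conversely, if `c (ℓ + 1) ≤ c (ℓ - 1)⁺`, write `c (ℓ + 1) = p⁺` with
`p ≤ c (ℓ - 1)`, using that `⁺` is an order automorphism. For each cover `q ≰ c (ℓ - 1)` of `p`,
`c (ℓ - 1) ⊔ q` is a cover of `c (ℓ - 1)` in `[c 0, c s]`; if that interval is the chain, this
cover is `c ℓ`. Hence `c (ℓ + 1) = p⁺ ≤ c ℓ`, which is absurd.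
-/

open Set

section ChainFinite

variable {L : Type*} [PartialOrder L]

lemma isStronglyAtomic_of_chain_finite
    (hfin : ∀ x y : L, ∀ c : Set L, c ⊆ Icc x y → IsChain (· ≤ ·) c → c.Finite) :
    IsStronglyAtomic L where
  exists_covBy_le_of_lt a b hab := by
    have hwf : (Ioc a b).WellFoundedOn (· < ·) := by
      refine wellFoundedOn_iff_no_descending_seq.2 fun f hf ↦ ?_
      have hanti : StrictAnti f := fun _ _ h ↦ f.map_rel_iff.2 h
      refine infinite_range_of_injective hanti.injective
        (hfin a b _ ?_ hanti.antitone.isChain_range)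
      rintro _ ⟨n, rfl⟩
      exact Ioc_subset_Icc_self (hf n)
    obtain ⟨m, ⟨ham, hmb⟩, hmin⟩ := hwf.exists_minimal ⟨b, hab, le_rfl⟩
    exact ⟨m, ⟨ham, fun t hat htm ↦ htm.not_ge (hmin ⟨hat, htm.le.trans hmb⟩ htm.le)⟩, hmb⟩

end ChainFinite

section CoveringChain

variable {L : Type*} [PartialOrder L] {s : ℕ} {c : ℕ → L}

lemma strictMonoOn_Iic_of_covBy (hcov : ∀ i < s, c i ⋖ c (i + 1)) : StrictMonoOn c (Iic s) :=
  strictMonoOn_Iic_of_lt_succ fun i hi ↦ by simpa using (hcov i hi).lt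

lemma le_of_covBy_chain (hcov : ∀ i < s, c i ⋖ c (i + 1)) {i j : ℕ} (hij : i ≤ j) (hj : j ≤ s) :
    c i ≤ c j :=
  (strictMonoOn_Iic_of_covBy hcov).monotoneOn (mem_Iic.2 (hij.trans hj)) (mem_Iic.2 hj) hij

lemma le_succ_of_covBy (hc : StrictMonoOn c (Iic s)) {i j : ℕ} (hi : i ≤ s)
    (h : c j ⋖ c i) : i ≤ j + 1 := by
  by_contra! hji
  exact h.2 (hc (mem_Iic.2 (by omega)) (mem_Iic.2 (by omega)) (lt_add_one j))
    (hc (mem_Iic.2 (by omega)) (mem_Iic.2 hi) hji)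

end CoveringChain

section UpperModular

variable {L : Type*} [Lattice L] [IsUpperModularLattice L]

lemma CovBy.covBy_sup_of_le_of_not_le {u w x : L} (huw : u ⋖ w) (hux : u ≤ x) (hwx : ¬ w ≤ x) :
    x ⋖ x ⊔ w := by
  have hinf : x ⊓ w = u :=
    (huw.eq_or_eq (le_inf hux huw.le) inf_le_right).resolve_right fun h ↦ hwx (h ▸ inf_le_left)
  exact covBy_sup_of_inf_covBy_right (hinf ▸ huw)

lemma le_of_covBy_of_covBy_of_not_le {b u w x y z : L} (hb : b ∈ upperBounds {v | x ⋖ v})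
    (hxy : x ⋖ y) (hyz : y ⋖ z) (hux : u ≤ x) (huw : u ⋖ w) (hwz : w ≤ z) (hwy : ¬ w ≤ y) :
    z ≤ b := by
  have hxw : x ⋖ x ⊔ w := huw.covBy_sup_of_le_of_not_le hux fun h ↦ hwy (h.trans hxy.le)
  have hyw : y ⊔ w = z :=
    (hyz.eq_or_eq le_sup_left (sup_le hyz.le hwz)).resolve_left fun h ↦ hwy (h ▸ le_sup_right)
  calc z = y ⊔ w := hyw.symm
    _ ≤ b := sup_le (hb hxy) (le_sup_right.trans (hb hxw))

lemma le_of_isLUB_covBy {p x y z : L} (hz : IsLUB {v | p ⋖ v} z) (hpx : p ≤ x) (hxy : x ≤ y)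
    (hxz : x ≤ z) (hcov : ∀ v, x ⋖ v → v ≤ z → v ≤ y) : z ≤ y := by
  refine hz.2 fun q (hq : p ⋖ q) ↦ ?_
  by_cases hqx : q ≤ x
  · exact hqx.trans hxy
  · have hxq := hq.covBy_sup_of_le_of_not_le hpx hqx
    exact le_sup_right.trans (hcov _ hxq (sup_le hxz (hz.1 hq)))

end UpperModular

section Segment

variable {L : Type*} [Lattice L] [IsUpperModularLattice L] {s : ℕ} {c : ℕ → L}

lemma Icc_succ_eq_image_of_not_le [IsStronglyAtomic L] {e : L → L}
    (he : ∀ x, e x ∈ upperBounds {y | x ⋖ y}) (hcov : ∀ i < s + 1, c i ⋖ c (i + 1))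
    (hseg : ∀ k, k + 2 ≤ s + 1 → ¬ c (k + 2) ≤ e (c k)) (ih : Icc (c 0) (c s) = c '' Iic s) :
    Icc (c 0) (c (s + 1)) = c '' Iic (s + 1) := by
  have hc {i j : ℕ} (hij : i ≤ j) (hj : j ≤ s + 1) : c i ≤ c j := le_of_covBy_chain hcov hij hj
  refine Subset.antisymm (fun z ⟨h0z, hzs⟩ ↦ ?_) ?_
  swap
  · rintro _ ⟨i, hi, rfl⟩
    exact ⟨hc (Nat.zero_le i) hi, hc hi le_rfl⟩
  by_cases hz : z ≤ c s
  · exact image_mono (Iic_subset_Iic.2 s.le_succ) (ih ▸ ⟨h0z, hz⟩)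
  obtain ⟨i, hi, hzi⟩ : z ⊓ c s ∈ c '' Iic s :=
    ih ▸ ⟨le_inf h0z (hc (Nat.zero_le s) s.le_succ), inf_le_right⟩
  have hiz : c i ≤ z := hzi ▸ inf_le_left
  have his : c i ≤ c s := hzi ▸ inf_le_right
  rcases (mem_Iic.1 hi).eq_or_lt with rfl | hilt
  · have hz' := ((hcov i (lt_add_one i)).eq_or_eq hiz hzs).resolve_left fun h ↦ hz (h ▸ le_rfl)
    exact ⟨i + 1, self_mem_Iic, hz'.symm⟩
  obtain ⟨k, rfl⟩ : ∃ k, s = k + 1 := ⟨s - 1, by omega⟩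
  obtain ⟨w, hiw, hwz⟩ := exists_covBy_le_of_lt (hiz.lt_of_ne fun h ↦ hz (h ▸ his))
  have hws : ¬ w ≤ c (k + 1) := fun h ↦ hiw.lt.not_ge (hzi ▸ le_inf hwz h)
  refine absurd ?_ (hseg k le_rfl)
  exact le_of_covBy_of_covBy_of_not_le (he _) (hcov k (by omega))
    (hcov (k + 1) (by omega)) (hc (by omega) (by omega)) hiw (hwz.trans hzs) hws

lemma Icc_eq_image_of_not_le [IsStronglyAtomic L] {e : L → L}
    (he : ∀ x, e x ∈ upperBounds {y | x ⋖ y}) (hcov : ∀ i < s, c i ⋖ c (i + 1))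
    (hseg : ∀ k, k + 2 ≤ s → ¬ c (k + 2) ≤ e (c k)) :
    Icc (c 0) (c s) = c '' Iic s := by
  induction s with
  | zero => ext; simp [eq_comm]
  | succ s ih =>
    exact Icc_succ_eq_image_of_not_le he hcov hseg
      (ih (fun i hi ↦ hcov i (by omega)) fun k hk ↦ hseg k (by omega))

lemma not_le_of_Icc_eq_image (e : L ≃o L) (he : ∀ x, IsLUB {y | x ⋖ y} (e x))
    (hcov : ∀ i < s, c i ⋖ c (i + 1)) (hIcc : Icc (c 0) (c s) = c '' Iic s) {k : ℕ}
    (hk : k + 2 ≤ s) : ¬ c (k + 2) ≤ e (c k) := by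
  intro hle
  have hmono {i j : ℕ} (hij : i ≤ j) (hj : j ≤ s) : c i ≤ c j := le_of_covBy_chain hcov hij hj
  have hlub : IsLUB {v | e.symm (c (k + 2)) ⋖ v} (c (k + 2)) := by
    simpa using he (e.symm (c (k + 2)))
  refine (hcov (k + 1) hk).lt.not_ge <| le_of_isLUB_covBy hlub (e.symm_apply_le.2 hle)
    (hcov k (by omega)).le (hmono (by omega) hk) fun v hkv hv ↦ ?_
  obtain ⟨i, hi, rfl⟩ : v ∈ c '' Iic s :=
    hIcc ▸ ⟨(hmono (Nat.zero_le k) (by omega)).trans hkv.le, hv.trans (hmono hk le_rfl)⟩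
  exact hmono (le_succ_of_covBy (strictMonoOn_Iic_of_covBy hcov) hi hkv) (by omega)

end Segment

/-- Characterization of segments in a uniform semimodular lattice: a covering
chain `x = c 0 ⋖ c 1 ⋖ ⋯ ⋖ c s = y` is a segment (i.e.
`c (ℓ+1) ∉ [c (ℓ−1), (c (ℓ−1))⁺]` for `1 ≤ ℓ ≤ s − 1`) if and only if the
interval `[x, y]` consists exactly of the elements `c 0, c 1, …, c s`. -/
theorem stmt14 {L : Type*} [Lattice L]
    (hfin : ∀ x y : L, ∀ c : Set L, c ⊆ Set.Icc x y → IsChain (· ≤ ·) c → c.Finite)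
    (hsemi : ∀ x a : L, x ⊓ a ⋖ a → x ⋖ x ⊔ a)
    (e : L ≃o L) (he : ∀ x : L, IsLUB {y : L | x ⋖ y} (e x))
    (s : ℕ) (c : ℕ → L)
    (hcov : ∀ i : ℕ, i < s → c i ⋖ c (i + 1)) :
    (∀ ℓ : ℕ, 1 ≤ ℓ → ℓ + 1 ≤ s → c (ℓ + 1) ∉ Set.Icc (c (ℓ - 1)) (e (c (ℓ - 1)))) ↔
      Set.Icc (c 0) (c s) = c '' Set.Iic s := by
  have := isStronglyAtomic_of_chain_finite hfin
  have : IsUpperModularLattice L :=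
    ⟨fun {a b} h ↦ sup_comm b a ▸ hsemi b a (inf_comm a b ▸ h)⟩
  have hseg : (∀ ℓ : ℕ, 1 ≤ ℓ → ℓ + 1 ≤ s → c (ℓ + 1) ∉ Icc (c (ℓ - 1)) (e (c (ℓ - 1)))) ↔
      ∀ k, k + 2 ≤ s → ¬ c (k + 2) ≤ e (c k) := by
    refine ⟨fun h k hk hle ↦ h (k + 1) (by omega) hk ⟨?_, hle⟩, fun h ℓ hℓ hℓs hmem ↦ ?_⟩
    · exact le_of_covBy_chain hcov (by omega) hk
    · obtain ⟨k, rfl⟩ : ∃ k, ℓ = k + 1 := ⟨ℓ - 1, by omega⟩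
      exact h k hℓs hmem.2
  rw [hseg]
  exact ⟨Icc_eq_image_of_not_le (fun x ↦ (he x).1) hcov,
    fun hIcc k hk ↦ not_le_of_Icc_eq_image e he hcov hIcc hk⟩
end

section
/- Let L be a uniform semimodular lattice, x ∈ L, and let (e_i^ℓ)_{ℓ≥0} for i = 1,…,k be an independent set of x-rays, meaning r_x(e_1^1 ∨ ⋯ ∨ e_k^1) = k. Then the sublattice generated by all elements of these rays is isomorphic to ℤ_+^k via (z_1,…,z_k) ↦ e_1^{z_1} ∨ ⋯ ∨ e_k^{z_k}. -/
/-!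
Write `V z = x ⊔ rays 1 z₁ ⊔ ⋯ ⊔ rays k z_k`. Monotonicity of `V` and `V (z ⊔ w) = V z ⊔ V w`
are formal. The rest rests on `rays i (zᵢ + 1) ≰ V z`, which makes every step along a ray a cover
`V z ⋖ V (z + eᵢ)`; it is proved by induction on `∑ z`. For `zᵢ > 0`, the cover at `z - eᵢ` would
put `rays i (zᵢ + 1)` below `(V (z - eᵢ))⁺ ⊓ (rays i zᵢ)⁺ = (V (z - eᵢ) ⊓ rays i zᵢ)⁺`, which is
`(rays i (zᵢ - 1))⁺`, against the segment condition. For `zᵢ = 0`, independence settles the case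
`z ≤ 1`; otherwise some `z_j ≥ 2`, and `rays i 1` could replace the last step along `j`, which
reduces to the first case. Meets are preserved by a second induction: for `wᵢ < zᵢ` the meet
`V z ⊓ V w` lies below `V (z - eᵢ)`, since otherwise the cover gives
`V z ≤ V (z - eᵢ) ⊔ V w = V ((z - eᵢ) ⊔ w)`, whose `i`-th coordinate is `zᵢ - 1`.
-/

/-- The join `x ⊔ ⋁_{i ∈ s} f i` in a lattice. -/
def foldJoin {ι L : Type*} [Lattice L] [DecidableEq ι] (s : Finset ι) (x : L)
    (f : ι → L) : L :=
  s.fold (· ⊔ ·) x f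

section

open Finset

variable {L : Type*} [Lattice L]

section FoldJoin

variable {ι : Type*} [DecidableEq ι] {s : Finset ι} {x : L} {f : ι → L}

theorem foldJoin_le_iff {c : L} : foldJoin s x f ≤ c ↔ x ≤ c ∧ ∀ i ∈ s, f i ≤ c :=
  fold_op_rel_iff_and (r := fun c a => a ≤ c) sup_le_iff

theorem base_le_foldJoin (s : Finset ι) (x : L) (f : ι → L) : x ≤ foldJoin s x f :=
  (foldJoin_le_iff.1 le_rfl).1

theorem le_foldJoin {i : ι} (hi : i ∈ s) (x : L) (f : ι → L) : f i ≤ foldJoin s x f :=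
  (foldJoin_le_iff.1 le_rfl).2 i hi

theorem SupClosed.foldJoin_mem {T : Set L} (hT : SupClosed T) (hx : x ∈ T)
    (hf : ∀ i ∈ s, f i ∈ T) : foldJoin s x f ∈ T := by
  induction s using Finset.induction_on with
  | empty => exact hx
  | insert a s ha ih =>
    rw [foldJoin, fold_insert ha]
    exact hT (hf a (mem_insert_self a s)) (ih fun i hi => hf i (mem_insert_of_mem hi))

end FoldJoin

section CovBy

variable {a b c : L}

theorem CovBy.inf_eq_of_not_le (hab : a ⋖ b) (hac : a ≤ c) (hbc : ¬ b ≤ c) : c ⊓ b = a :=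
  (hab.eq_or_eq (le_inf hac hab.le) inf_le_right).resolve_right fun h => hbc (h ▸ inf_le_left)

theorem CovBy.sup_eq_of_not_le (hab : a ⋖ b) (hcb : c ≤ b) (hca : ¬ c ≤ a) : a ⊔ c = b :=
  (hab.eq_or_eq le_sup_left (sup_le hab.le hcb)).resolve_left
    fun h => hca (le_sup_right.trans h.le)

theorem CovBy.covBy_sup_of_not_le [IsUpperModularLattice L] (hab : a ⋖ b) (hac : a ≤ c)
    (hbc : ¬ b ≤ c) : c ⋖ c ⊔ b :=
  covBy_sup_of_inf_covBy_right (hab.inf_eq_of_not_le hac hbc ▸ hab)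

end CovBy

section Pi

variable {ι : Type*} [DecidableEq ι]

theorem Pi.exists_eq_add_single {z : ι → ℕ} {i : ι} (hi : 1 ≤ z i) :
    ∃ z' : ι → ℕ, z = z' + Pi.single i 1 :=
  ⟨z - Pi.single i 1, (tsub_add_cancel_of_le fun j => by
    rcases eq_or_ne j i with rfl | hj <;> simp [*]).symm⟩

theorem Fintype.sum_add_single [Fintype ι] (z : ι → ℕ) (i : ι) :
    ∑ j, (z + Pi.single i 1 : ι → ℕ) j = ∑ j, z j + 1 := by
  simp [Finset.sum_add_distrib]

end Pi

/-- An `x`-ray, where `e a` stands for `a⁺`. The segment condition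
`r (ℓ + 2) ∉ [r ℓ, (r ℓ)⁺]` is stated as `¬ r (ℓ + 2) ≤ e (r ℓ)`, since `r ℓ ≤ r (ℓ + 2)`
holds anyway. -/
structure IsRay (e : L → L) (x : L) (r : ℕ → L) : Prop where
  zero : r 0 = x
  covBy : ∀ ℓ, r ℓ ⋖ r (ℓ + 1)
  segment : ∀ ℓ, ¬ r (ℓ + 2) ≤ e (r ℓ)

theorem IsRay.monotone {e : L → L} {x : L} {r : ℕ → L} (h : IsRay e x r) : Monotone r :=
  monotone_nat_of_le_succ fun ℓ => (h.covBy ℓ).le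

theorem IsRay.base_le {e : L → L} {x : L} {r : ℕ → L} (h : IsRay e x r) (ℓ : ℕ) :
    x ≤ r ℓ :=
  h.zero ▸ h.monotone (Nat.zero_le ℓ)

variable {k : ℕ}

def rayJoin (x : L) (rays : Fin k → ℕ → L) (z : Fin k → ℕ) : L :=
  foldJoin univ x fun i => rays i (z i)

section RayJoin

variable {x c : L} {rays : Fin k → ℕ → L} {z w : Fin k → ℕ} {i : Fin k}

theorem rayJoin_le_iff : rayJoin x rays z ≤ c ↔ x ≤ c ∧ ∀ i, rays i (z i) ≤ c := by
  simp [rayJoin, foldJoin_le_iff]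

theorem le_rayJoin (x : L) (rays : Fin k → ℕ → L) (z : Fin k → ℕ) (i : Fin k) :
    rays i (z i) ≤ rayJoin x rays z :=
  (rayJoin_le_iff.1 le_rfl).2 i

theorem base_le_rayJoin (x : L) (rays : Fin k → ℕ → L) (z : Fin k → ℕ) :
    x ≤ rayJoin x rays z :=
  (rayJoin_le_iff.1 le_rfl).1

theorem rayJoin_mono (hmono : ∀ i, Monotone (rays i)) : Monotone (rayJoin x rays) :=
  fun _ w hle => rayJoin_le_iff.2
    ⟨base_le_rayJoin x rays w, fun i => (hmono i (hle i)).trans (le_rayJoin x rays w i)⟩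

theorem rayJoin_sup (hmono : ∀ i, Monotone (rays i)) :
    rayJoin x rays (z ⊔ w) = rayJoin x rays z ⊔ rayJoin x rays w := by
  refine le_antisymm (rayJoin_le_iff.2 ⟨le_sup_of_le_left (base_le_rayJoin x rays z),
    fun i => ?_⟩) (sup_le (rayJoin_mono hmono le_sup_left) (rayJoin_mono hmono le_sup_right))
  rcases le_total (z i) (w i) with h | h
  · simpa [h] using le_sup_of_le_right (le_rayJoin x rays w i)
  · simpa [h] using le_sup_of_le_left (le_rayJoin x rays z i)

theorem ray_le_rayJoin_add_single (x : L) (rays : Fin k → ℕ → L) (z : Fin k → ℕ)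
    (i : Fin k) : rays i (z i + 1) ≤ rayJoin x rays (z + Pi.single i 1) := by
  have h := le_rayJoin x rays (z + Pi.single i 1) i
  rwa [Pi.add_apply, Pi.single_eq_same] at h

theorem rayJoin_add_single (hmono : ∀ i, Monotone (rays i)) :
    rayJoin x rays (z + Pi.single i 1) = rayJoin x rays z ⊔ rays i (z i + 1) := by
  refine le_antisymm (rayJoin_le_iff.2 ⟨le_sup_of_le_left (base_le_rayJoin x rays z),
    fun j => ?_⟩) (sup_le (rayJoin_mono hmono le_self_add) ?_)
  · rcases eq_or_ne j i with rfl | hj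
    · simp
    · simpa [hj] using le_sup_of_le_left (le_rayJoin x rays z j)
  · exact ray_le_rayJoin_add_single x rays z i

theorem rayJoin_single {e : L → L} (hrays : ∀ i, IsRay e x (rays i)) (ℓ : ℕ) :
    rayJoin x rays (Pi.single i ℓ) = rays i ℓ := by
  refine le_antisymm (rayJoin_le_iff.2 ⟨?_, fun j => ?_⟩) ?_
  · exact (hrays i).base_le ℓ
  · rcases eq_or_ne j i with rfl | hj
    · simp
    · simpa [hj, (hrays j).zero] using (hrays i).base_le ℓ
  · have := le_rayJoin x rays (Pi.single i ℓ) i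
    rwa [Pi.single_eq_same] at this

end RayJoin

structure IsIndependentRays (e : L → L) (x : L) (rays : Fin k → ℕ → L) : Prop where
  isRay : ∀ i, IsRay e x (rays i)
  inf_eq : ∀ i, rays i 1 ⊓ foldJoin (univ.erase i) x (fun j => rays j 1) = x

namespace IsIndependentRays

variable {x : L} {rays : Fin k → ℕ → L} {z w : Fin k → ℕ} {i j : Fin k}

section

variable {e : L → L}

theorem monotone (h : IsIndependentRays e x rays) (i : Fin k) : Monotone (rays i) :=
  (h.isRay i).monotone

theorem not_le_rayJoin_of_le_one (h : IsIndependentRays e x rays) (hz : ∀ j, z j ≤ 1)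
    (hi : z i = 0) : ¬ rays i 1 ≤ rayJoin x rays z := by
  intro hle
  have hrest : rayJoin x rays z ≤ foldJoin (univ.erase i) x (fun j => rays j 1) := by
    refine rayJoin_le_iff.2 ⟨base_le_foldJoin _ x _, fun j => ?_⟩
    rcases eq_or_ne j i with rfl | hj
    · rw [hi, (h.isRay j).zero]
      exact base_le_foldJoin _ x _
    · exact (h.monotone j (hz j)).trans
        (le_foldJoin (mem_erase.2 ⟨hj, mem_univ j⟩) x fun j => rays j 1)
  have hx : x ⋖ rays i 1 := (h.isRay i).zero ▸ (h.isRay i).covBy 0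
  exact hx.ne ((h.inf_eq i).symm.trans (inf_eq_left.2 (hle.trans hrest)))

end

variable [IsUpperModularLattice L] {e : L ≃o L}

theorem rayJoin_covBy_add_single (h : IsIndependentRays e x rays)
    (hi : ¬ rays i (z i + 1) ≤ rayJoin x rays z) :
    rayJoin x rays z ⋖ rayJoin x rays (z + Pi.single i 1) := by
  rw [rayJoin_add_single h.monotone]
  exact ((h.isRay i).covBy _).covBy_sup_of_not_le (le_rayJoin x rays z i) hi

theorem not_le_rayJoin_add_single (h : IsIndependentRays e x rays)
    (he : ∀ a b : L, a ⋖ b → b ≤ e a) (hi : ¬ rays i (z i + 1) ≤ rayJoin x rays z) :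
    ¬ rays i (z i + 2) ≤ rayJoin x rays (z + Pi.single i 1) := by
  intro hle
  have hinf : rayJoin x rays z ⊓ rays i (z i + 1) = rays i (z i) :=
    ((h.isRay i).covBy _).inf_eq_of_not_le (le_rayJoin x rays z i) hi
  apply (h.isRay i).segment (z i)
  calc rays i (z i + 2)
      ≤ e (rayJoin x rays z) ⊓ e (rays i (z i + 1)) :=
        le_inf (hle.trans (he _ _ (h.rayJoin_covBy_add_single hi)))
          (he _ _ ((h.isRay i).covBy _))
    _ = e (rays i (z i)) := by rw [← e.map_inf, hinf]

theorem rayJoin_add_single_eq_of_le (h : IsIndependentRays e x rays)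
    (hi : ¬ rays i (z i + 1) ≤ rayJoin x rays z) (hj : ¬ rays j (z j + 1) ≤ rayJoin x rays z)
    (hle : rays i (z i + 1) ≤ rayJoin x rays (z + Pi.single j 1)) :
    rayJoin x rays (z + Pi.single j 1) = rayJoin x rays (z + Pi.single i 1) := by
  rw [rayJoin_add_single h.monotone (i := i),
    ← (h.rayJoin_covBy_add_single hj).sup_eq_of_not_le hle hi]

theorem not_succ_le_rayJoin (h : IsIndependentRays e x rays)
    (he : ∀ a b : L, a ⋖ b → b ≤ e a) (z : Fin k → ℕ) (i : Fin k) :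
    ¬ rays i (z i + 1) ≤ rayJoin x rays z := by
  induction hn : ∑ j, z j using Nat.strong_induction_on generalizing z i with
  | _ n IH =>
  have IH' (z' : Fin k → ℕ) (hz' : ∑ j, z' j + 1 ≤ n) (j : Fin k) :
      ¬ rays j (z' j + 1) ≤ rayJoin x rays z' :=
    IH _ hz' z' j rfl
  have hstep (z' : Fin k → ℕ) (j : Fin k) (hz' : ∑ l, z' l + 1 = n) :
      ¬ rays j ((z' + Pi.single j 1 : Fin k → ℕ) j + 1) ≤
        rayJoin x rays (z' + Pi.single j 1) := by
    simpa using h.not_le_rayJoin_add_single he (IH' z' hz'.le j)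
  obtain hi | hi := Nat.eq_zero_or_pos (z i)
  swap
  · obtain ⟨z', rfl⟩ := Pi.exists_eq_add_single hi
    exact hstep z' i (by rw [← hn, Fintype.sum_add_single])
  rw [hi]
  by_cases hsmall : ∀ j, z j ≤ 1
  · exact h.not_le_rayJoin_of_le_one hsmall hi
  obtain ⟨j, hj⟩ : ∃ j, 1 < z j := by simpa using hsmall
  obtain ⟨z', rfl⟩ := Pi.exists_eq_add_single hj.le
  obtain ⟨z'', rfl⟩ := Pi.exists_eq_add_single (show 0 < z' j by simpa using hj)
  have hij : i ≠ j := by rintro rfl; simp at hi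
  have hz'i : (z'' + Pi.single j 1 : Fin k → ℕ) i = 0 := by simpa [hij] using hi
  have hsum : ∑ l, z'' l + 2 = n := by simp only [← hn, Fintype.sum_add_single]
  intro hle
  have hz' : ∑ l, (z'' + Pi.single j 1 : Fin k → ℕ) l + 1 ≤ n := by
    rw [Fintype.sum_add_single]; omega
  -- the first step along `i` stands in for the last step along `j`
  have hexch := h.rayJoin_add_single_eq_of_le (IH' _ hz' i) (IH' _ hz' j) (by rwa [hz'i])
  apply hstep (z'' + Pi.single i 1) j (by rw [Fintype.sum_add_single]; omega)
  rw [add_right_comm, ← hexch]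
  have hray := le_rayJoin x rays (z'' + Pi.single j 1 + Pi.single j 1) j
  simp only [Pi.add_apply, Pi.single_eq_same, Pi.single_eq_of_ne hij.symm] at hray ⊢
  exact hray

theorem rayJoin_le_rayJoin_iff (h : IsIndependentRays e x rays)
    (he : ∀ a b : L, a ⋖ b → b ≤ e a) : rayJoin x rays z ≤ rayJoin x rays w ↔ z ≤ w := by
  refine ⟨fun hle i => ?_, fun hle => rayJoin_mono h.monotone hle⟩
  by_contra hlt
  exact h.not_succ_le_rayJoin he w i
    ((h.monotone i (not_le.1 hlt)).trans ((le_rayJoin x rays z i).trans hle))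

theorem rayJoin_inf (h : IsIndependentRays e x rays) (he : ∀ a b : L, a ⋖ b → b ≤ e a) :
    rayJoin x rays (z ⊓ w) = rayJoin x rays z ⊓ rayJoin x rays w := by
  refine le_antisymm (le_inf (rayJoin_mono h.monotone inf_le_left)
    (rayJoin_mono h.monotone inf_le_right)) ?_
  induction hn : ∑ j, z j using Nat.strong_induction_on generalizing z with
  | _ n IH =>
  by_cases hzw : z ≤ w
  · rw [inf_eq_left.2 hzw]
    exact inf_le_left
  obtain ⟨i, hi⟩ : ∃ i, w i < z i := by simpa [Pi.le_def] using hzw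
  obtain ⟨z', rfl⟩ := Pi.exists_eq_add_single (Nat.one_le_of_lt hi)
  have hwi : w i ≤ z' i := by simpa [Nat.lt_succ_iff] using hi
  have hcov := h.rayJoin_covBy_add_single (h.not_succ_le_rayJoin he z' i)
  have hdrop : rayJoin x rays (z' + Pi.single i 1) ⊓ rayJoin x rays w ≤ rayJoin x rays z' := by
    by_contra hnot
    apply h.not_succ_le_rayJoin he (z' ⊔ w) i
    have hsup : (z' ⊔ w) i = z' i := by simp [hwi]
    rw [hsup, rayJoin_sup h.monotone]
    calc rays i (z' i + 1)
        ≤ rayJoin x rays (z' + Pi.single i 1) := ray_le_rayJoin_add_single x rays z' i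
      _ = rayJoin x rays z' ⊔ (rayJoin x rays (z' + Pi.single i 1) ⊓ rayJoin x rays w) :=
        (hcov.sup_eq_of_not_le inf_le_left hnot).symm
      _ ≤ rayJoin x rays z' ⊔ rayJoin x rays w := sup_le_sup_left inf_le_right _
  have hinf : (z' + Pi.single i 1) ⊓ w = z' ⊓ w := by
    ext j
    rcases eq_or_ne j i with rfl | hj
    · simp [hwi, Nat.le_succ_of_le hwi]
    · simp [hj]
  calc rayJoin x rays (z' + Pi.single i 1) ⊓ rayJoin x rays w
      ≤ rayJoin x rays z' ⊓ rayJoin x rays w := le_inf hdrop inf_le_right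
    _ ≤ rayJoin x rays (z' ⊓ w) :=
      IH _ (by rw [← hn, Fintype.sum_add_single]; omega) (z := z') rfl
    _ = rayJoin x rays ((z' + Pi.single i 1) ⊓ w) := by rw [hinf]

theorem range_rayJoin (h : IsIndependentRays e x rays) (he : ∀ a b : L, a ⋖ b → b ≤ e a)
    (hk : 0 < k) : Set.range (rayJoin x rays) = latticeClosure (⋃ i, Set.range (rays i)) := by
  apply subset_antisymm
  · rintro _ ⟨z, rfl⟩
    exact isSublattice_latticeClosure.supClosed.foldJoin_mem
      (subset_latticeClosure (Set.mem_iUnion.2 ⟨⟨0, hk⟩, 0, (h.isRay _).zero⟩))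
      fun i _ => subset_latticeClosure (Set.mem_iUnion.2 ⟨i, z i, rfl⟩)
  refine latticeClosure_min (Set.iUnion_subset fun i => ?_) ⟨?_, ?_⟩
  · rintro _ ⟨ℓ, rfl⟩
    exact ⟨Pi.single i ℓ, rayJoin_single h.isRay ℓ⟩
  · rintro _ ⟨z, rfl⟩ _ ⟨w, rfl⟩
    exact ⟨z ⊔ w, rayJoin_sup h.monotone⟩
  · rintro _ ⟨z, rfl⟩ _ ⟨w, rfl⟩
    exact ⟨z ⊓ w, h.rayJoin_inf he⟩

end IsIndependentRays

end

theorem stmt15_general {L : Type*} [Lattice L]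
    (hsemi : ∀ x a : L, x ⊓ a ⋖ a → x ⋖ x ⊔ a)
    (e : L ≃o L) (he : ∀ x : L, IsLUB {y : L | x ⋖ y} (e x))
    (x : L) {k : ℕ} (hk : 0 < k)
    (rays : Fin k → ℕ → L)
    (hray0 : ∀ i, rays i 0 = x)
    (hraycov : ∀ i (ℓ : ℕ), rays i ℓ ⋖ rays i (ℓ + 1))
    (hraystraight : ∀ i (ℓ : ℕ), 1 ≤ ℓ →
      rays i (ℓ + 1) ∉ Set.Icc (rays i (ℓ - 1)) (e (rays i (ℓ - 1))))
    (hind : ∀ i : Fin k,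
      rays i 1 ⊓ foldJoin (Finset.univ.erase i) x (fun j => rays j 1) = x) :
    (∀ z w : Fin k → ℕ,
        (foldJoin Finset.univ x (fun i => rays i (z i)) ≤
          foldJoin Finset.univ x (fun i => rays i (w i)) ↔ z ≤ w)) ∧
    (∀ z w : Fin k → ℕ,
        foldJoin Finset.univ x (fun i => rays i ((z ⊔ w) i)) =
          foldJoin Finset.univ x (fun i => rays i (z i)) ⊔
            foldJoin Finset.univ x (fun i => rays i (w i))) ∧
    (∀ z w : Fin k → ℕ,
        foldJoin Finset.univ x (fun i => rays i ((z ⊓ w) i)) =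
          foldJoin Finset.univ x (fun i => rays i (z i)) ⊓
            foldJoin Finset.univ x (fun i => rays i (w i))) ∧
    Set.range (fun z : Fin k → ℕ => foldJoin Finset.univ x (fun i => rays i (z i))) =
      latticeClosure (⋃ i : Fin k, Set.range (rays i)) := by
  have : IsUpperModularLattice L :=
    ⟨fun {a b} hab => sup_comm b a ▸ hsemi b a (inf_comm a b ▸ hab)⟩
  have he' (a b : L) (hab : a ⋖ b) : b ≤ e a := (he a).1 hab
  have h : IsIndependentRays e x rays :=
    ⟨fun i => ⟨hray0 i, hraycov i, fun ℓ hle =>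
      hraystraight i (ℓ + 1) le_add_self ⟨(hraycov i ℓ).le.trans (hraycov i _).le, hle⟩⟩, hind⟩
  exact ⟨fun z w => h.rayJoin_le_rayJoin_iff he', fun z w => rayJoin_sup h.monotone,
    fun z w => h.rayJoin_inf he', h.range_rayJoin he' hk⟩

/-- Let `rays i` (`i = 1,…,k`) be an independent set of `x`-rays in a uniform
semimodular lattice (each an infinite covering chain starting at `x` satisfying
the segment condition, with the atoms `rays i 1` of `[x, x⁺]` independent:
`rays i 1 ⊓ ⋁_{j ≠ i} rays j 1 = x`). Then the sublattice generated by the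
elements of these rays is isomorphic to `ℤ₊^k` via
`(z₁,…,z_k) ↦ rays 1 z₁ ⊔ ⋯ ⊔ rays k z_k`: this map is an order embedding, a
lattice homomorphism, and its range is the sublattice generated by the rays. -/
theorem stmt15 {L : Type*} [Lattice L]
    (hfin : ∀ x y : L, ∀ c : Set L, c ⊆ Set.Icc x y → IsChain (· ≤ ·) c → c.Finite)
    (hsemi : ∀ x a : L, x ⊓ a ⋖ a → x ⋖ x ⊔ a)
    (e : L ≃o L) (he : ∀ x : L, IsLUB {y : L | x ⋖ y} (e x))
    (x : L) {k : ℕ} (hk : 0 < k)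
    (rays : Fin k → ℕ → L)
    (hray0 : ∀ i, rays i 0 = x)
    (hraycov : ∀ i (ℓ : ℕ), rays i ℓ ⋖ rays i (ℓ + 1))
    (hraystraight : ∀ i (ℓ : ℕ), 1 ≤ ℓ →
      rays i (ℓ + 1) ∉ Set.Icc (rays i (ℓ - 1)) (e (rays i (ℓ - 1))))
    (hind : ∀ i : Fin k,
      rays i 1 ⊓ foldJoin (Finset.univ.erase i) x (fun j => rays j 1) = x) :
    (∀ z w : Fin k → ℕ,
        (foldJoin Finset.univ x (fun i => rays i (z i)) ≤
          foldJoin Finset.univ x (fun i => rays i (w i)) ↔ z ≤ w)) ∧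
    (∀ z w : Fin k → ℕ,
        foldJoin Finset.univ x (fun i => rays i ((z ⊔ w) i)) =
          foldJoin Finset.univ x (fun i => rays i (z i)) ⊔
            foldJoin Finset.univ x (fun i => rays i (w i))) ∧
    (∀ z w : Fin k → ℕ,
        foldJoin Finset.univ x (fun i => rays i ((z ⊓ w) i)) =
          foldJoin Finset.univ x (fun i => rays i (z i)) ⊓
            foldJoin Finset.univ x (fun i => rays i (w i))) ∧
    Set.range (fun z : Fin k → ℕ => foldJoin Finset.univ x (fun i => rays i (z i))) =
      latticeClosure (⋃ i : Fin k, Set.range (rays i)) :=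
  stmt15_general hsemi e he x hk rays hray0 hraycov hraystraight hind
end

section
/- Let K be a field and K(t)⁻ the subring of rational functions of degree at most 0. Let B ⊆ K(t)^n be a K(t)-basis of K(t)^n that maximizes ω(B') = deg det(B') over all K(t)-bases B' drawn from a finite set E ⊆ K(t)^n of vectors containing B. Then every vector u ∈ E lies in the K(t)⁻-module generated by B; i.e., the K(t)⁻-module generated by E is free with basis B. -/
/-!
Cramer's rule writes `u = ∑ᵢ (det Bᵢᵤ / det B) • Bᵢ`, where `Bᵢᵤ` is `B` with its `i`-th vector
replaced by `u`. When `u ∈ E`, each nonsingular `Bᵢᵤ` is again a basis drawn from `E`, so by the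
maximality of `B` its determinant has degree at most `deg det B`, and every coefficient lies in
`K(t)⁻`.
-/

open Matrix

namespace Matrix

theorem updateCol_transpose_of {R ι : Type*} [DecidableEq ι] (B : ι → ι → R) (i : ι) (u : ι → R) :
    (of B)ᵀ.updateCol i u = (of (Function.update B i u))ᵀ := by
  rw [updateCol_transpose]
  rfl

theorem cramer_transpose_of {R ι : Type*} [CommRing R] [Fintype ι] [DecidableEq ι]
    (B : ι → ι → R) (u : ι → R) (i : ι) :
    (of B)ᵀ.cramer u i = (of (Function.update B i u))ᵀ.det := by
  rw [cramer_apply, updateCol_transpose_of]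

theorem sum_cramer_div_det_mul {F ι : Type*} [Field F] [Fintype ι] [DecidableEq ι]
    (B : ι → ι → F) (hB : (of B)ᵀ.det ≠ 0) (u : ι → F) (j : ι) :
    ∑ i, (of B)ᵀ.cramer u i / (of B)ᵀ.det * B i j = u j := by
  have h := congrFun (mulVec_cramer (of B)ᵀ u) j
  simp only [mulVec, dotProduct, transpose_apply, of_apply, Pi.smul_apply, smul_eq_mul] at h
  simp only [div_mul_eq_mul_div, ← Finset.sum_div, div_eq_iff hB]
  rw [mul_comm (u j), ← h]
  exact Finset.sum_congr rfl fun i _ => mul_comm _ _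

end Matrix

section RatFunc

variable {K : Type*} [Field K] {ι : Type*} [Fintype ι] [DecidableEq ι]

theorem RatFunc.intDegree_cramer_le_of_isMax (E : Set (ι → RatFunc K)) (B : ι → ι → RatFunc K)
    (hBE : ∀ i, B i ∈ E)
    (hmax : ∀ B' : ι → ι → RatFunc K, (∀ i, B' i ∈ E) → (of B')ᵀ.det ≠ 0 →
      (of B')ᵀ.det.intDegree ≤ (of B)ᵀ.det.intDegree)
    {u : ι → RatFunc K} (hu : u ∈ E) (i : ι) (hc : (of B)ᵀ.cramer u i ≠ 0) :
    ((of B)ᵀ.cramer u i).intDegree ≤ (of B)ᵀ.det.intDegree := by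
  rw [cramer_transpose_of] at hc ⊢
  refine hmax _ (fun j => ?_) hc
  rcases eq_or_ne j i with rfl | hj
  · simpa using hu
  · simpa [hj] using hBE j

theorem RatFunc.intDegree_div_nonpos {x y : RatFunc K} (hy : y ≠ 0)
    (h : x ≠ 0 → x.intDegree ≤ y.intDegree) : (x / y).intDegree ≤ 0 := by
  rcases eq_or_ne x 0 with rfl | hx
  · simp
  · rw [RatFunc.intDegree_div hx hy]
    linarith [h hx]

end RatFunc

/-- Let `E ⊆ K(t)^n` be a finite set of vectors and `B` an `n`-tuple of vectors
of `E` forming a `K(t)`-basis (nonzero determinant) which maximizes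
`ω(B') = deg det B'` over all bases drawn from `E`. Then every `u ∈ E` lies in
the `K(t)⁻`-module generated by `B` (where `K(t)⁻` is the ring of rational
functions of degree at most `0`); i.e. the `K(t)⁻`-module generated by `E` is
free with basis `B`. -/
theorem stmt17 {K : Type*} [Field K] {n : ℕ}
    (E : Finset (Fin n → RatFunc K))
    (B : Fin n → (Fin n → RatFunc K))
    (hBE : ∀ i, B i ∈ E)
    (hBbasis : (Matrix.of fun i j => B j i).det ≠ 0)
    (hmax : ∀ B' : Fin n → (Fin n → RatFunc K), (∀ i, B' i ∈ E) →
      (Matrix.of fun i j => B' j i).det ≠ 0 →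
      ((Matrix.of fun i j => B' j i).det).intDegree ≤
        ((Matrix.of fun i j => B j i).det).intDegree) :
    ∀ u ∈ E, ∃ lam : Fin n → RatFunc K,
      (∀ i, (lam i).intDegree ≤ 0) ∧ ∀ j, u j = ∑ i, lam i * B i j := by
  intro u hu
  refine ⟨fun i => (of B)ᵀ.cramer u i / (of B)ᵀ.det, fun i => ?_,
    fun j => (sum_cramer_div_det_mul B hBbasis u j).symm⟩
  exact RatFunc.intDegree_div_nonpos hBbasis
    (RatFunc.intDegree_cramer_le_of_isMax (E : Set _) B hBE hmax hu i)
end
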